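/- arXiv:1007.1791 — 2 statements merged into one kernel-verified Lean document; each statement's English description precedes it below -/
import Mathlib

section
/- For every real number y with |y| < 1, the infinite product ∏_{d=1}^∞ (1 − y^d)^{φ(d)/d} converges (in the sense that the partial products converge, i.e., the family of factors has the product) and equals exp(−y/(1 − y)), where φ is Euler's totient function and the factors are real powers of the positive real numbers 1 − y^d. -/
/-!
Taking logarithms, the claim becomes `∑_{d ≥ 1} (φ(d)/d) log(1 - y^d) = -y/(1 - y)`.
Expanding `-log(1 - y^d) = ∑_{k ≥ 1} y^{dk}/k` gives a double series over `(d, k)`; grouping its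
terms by `n = dk` instead, the coefficient of `y^n` is `(1/n) ∑_{d ∣ n} φ(d) = 1`, so the double
series sums to `∑_{n ≥ 1} y^n = y/(1 - y)`. The regrouping is legitimate because the same
computation with `|y|` in place of `y` shows absolute convergence.
-/

open Function Real

theorem hasSum_mul_fiber_divisorsAntidiagonal {M : Type*} [AddCommMonoid M] [TopologicalSpace M]
    {f : ℕ × ℕ → M} (hf : ∀ p : ℕ × ℕ, p.1 * p.2 = 0 → f p = 0) (n : ℕ) :
    HasSum (fun p : {p : ℕ × ℕ // p.1 * p.2 = n} => f p) (∑ p ∈ n.divisorsAntidiagonal, f p) := by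
  refine hasSum_subtype_iff_indicator (s := {p : ℕ × ℕ | p.1 * p.2 = n}).2 ?_
  have hsum : ∑ p ∈ n.divisorsAntidiagonal, f p
      = ∑ p ∈ n.divisorsAntidiagonal, {p : ℕ × ℕ | p.1 * p.2 = n}.indicator f p :=
    Finset.sum_congr rfl fun p hp =>
      (Set.indicator_of_mem (s := {p : ℕ × ℕ | p.1 * p.2 = n})
        (Nat.mem_divisorsAntidiagonal.1 hp).1 f).symm
  rw [hsum]
  refine hasSum_sum_of_ne_finset_zero fun p hp => ?_
  rw [Set.indicator_apply_eq_zero]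
  intro hpn
  refine hf p ?_
  by_contra h0
  exact hp (Nat.mem_divisorsAntidiagonal.2 ⟨hpn, fun hn => h0 (hpn.trans hn)⟩)

theorem HasSum.sum_divisorsAntidiagonal {M : Type*} [AddCommMonoid M] [TopologicalSpace M]
    [ContinuousAdd M] [RegularSpace M] {f : ℕ × ℕ → M} {a : M} (h : HasSum f a)
    (hf : ∀ p : ℕ × ℕ, p.1 * p.2 = 0 → f p = 0) :
    HasSum (fun n : ℕ => ∑ p ∈ n.divisorsAntidiagonal, f p) a :=
  ((Equiv.sigmaFiberEquiv fun p : ℕ × ℕ => p.1 * p.2).hasSum_iff.2 h).sigma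
    (hasSum_mul_fiber_divisorsAntidiagonal hf)

theorem summable_of_sum_divisorsAntidiagonal_of_nonneg {f : ℕ × ℕ → ℝ} (h0 : 0 ≤ f)
    (hf : ∀ p : ℕ × ℕ, p.1 * p.2 = 0 → f p = 0)
    (hs : Summable fun n : ℕ => ∑ p ∈ n.divisorsAntidiagonal, f p) : Summable f := by
  rw [← (Equiv.sigmaFiberEquiv fun p : ℕ × ℕ => p.1 * p.2).summable_iff]
  refine (summable_sigma_of_nonneg fun _ => h0 _).2
    ⟨fun n => (hasSum_mul_fiber_divisorsAntidiagonal hf n).summable, ?_⟩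
  simpa only [Function.comp_apply, Equiv.sigmaFiberEquiv_apply,
    fun n => (hasSum_mul_fiber_divisorsAntidiagonal hf n).tsum_eq] using hs

theorem abs_pow_lt_one {y : ℝ} (h : |y| < 1) {d : ℕ} (hd : d ≠ 0) : |y ^ d| < 1 := by
  rw [abs_pow]
  exact pow_lt_one₀ (abs_nonneg y) h hd

/-- The terms with `d = 0` or `k = 0` vanish (`φ 0 = 0`, `x / 0 = 0`), so the double series
`∑_{d, k ≥ 1} (φ(d)/d) y^{dk}/k` can be taken over all of `ℕ × ℕ`. -/
noncomputable def totientLogTerm (y : ℝ) (p : ℕ × ℕ) : ℝ :=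
  (p.1.totient / p.1 : ℝ) * (y ^ (p.1 * p.2) / p.2)

namespace totientLogTerm

theorem eq_zero_of_mul_eq_zero (y : ℝ) {p : ℕ × ℕ} (hp : p.1 * p.2 = 0) :
    totientLogTerm y p = 0 := by
  rcases Nat.mul_eq_zero.1 hp with h | h <;> simp [totientLogTerm, h]

theorem abs_eq (y : ℝ) (p : ℕ × ℕ) : |totientLogTerm y p| = totientLogTerm |y| p := by
  simp only [totientLogTerm, abs_mul, abs_div, abs_pow, Nat.abs_cast]

theorem sum_divisorsAntidiagonal (y : ℝ) {n : ℕ} (hn : n ≠ 0) :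
    ∑ p ∈ n.divisorsAntidiagonal, totientLogTerm y p = y ^ n := by
  have hterm : ∀ d ∈ n.divisors,
      (d.totient / d : ℝ) * (y ^ (d * (n / d)) / (n / d : ℕ)) = d.totient * (y ^ n / n) := by
    intro d hd
    have hdvd := Nat.dvd_of_mem_divisors hd
    have hd0 : (d : ℝ) ≠ 0 := Nat.cast_ne_zero.2 (Nat.ne_of_gt (Nat.pos_of_mem_divisors hd))
    rw [Nat.mul_div_cancel' hdvd, Nat.cast_div hdvd hd0]
    field_simp
  calc ∑ p ∈ n.divisorsAntidiagonal, totientLogTerm y p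
      = ∑ d ∈ n.divisors, (d.totient : ℝ) * (y ^ n / n) :=
        (Nat.sum_divisorsAntidiagonal fun d k => totientLogTerm y (d, k)).trans
          (Finset.sum_congr rfl hterm)
    _ = y ^ n := by
        rw [← Finset.sum_mul, ← Nat.cast_sum, Nat.sum_totient]
        field_simp

variable {y : ℝ}

theorem hasSum_sum_divisorsAntidiagonal (h : |y| < 1) :
    HasSum (fun n : ℕ => ∑ p ∈ n.divisorsAntidiagonal, totientLogTerm y p) (y / (1 - y)) := by
  refine (hasSum_nat_add_iff' 1).1 ?_
  simp only [sum_divisorsAntidiagonal y (Nat.succ_ne_zero _), Finset.sum_range_one,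
    Nat.divisorsAntidiagonal_zero, Finset.sum_empty, sub_zero, pow_succ]
  rw [div_eq_inv_mul]
  exact (hasSum_geometric_of_abs_lt_one h).mul_right y

theorem summable (h : |y| < 1) : Summable (totientLogTerm y) := by
  refine Summable.of_abs ?_
  simp only [abs_eq]
  exact summable_of_sum_divisorsAntidiagonal_of_nonneg (fun p => abs_eq y p ▸ abs_nonneg _)
    (fun _ => eq_zero_of_mul_eq_zero _)
    (hasSum_sum_divisorsAntidiagonal (by rwa [abs_abs])).summable

theorem hasSum (h : |y| < 1) : HasSum (totientLogTerm y) (y / (1 - y)) := by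
  have hS := (summable h).hasSum
  rwa [(hS.sum_divisorsAntidiagonal fun _ => eq_zero_of_mul_eq_zero y).unique
    (hasSum_sum_divisorsAntidiagonal h)] at hS

theorem hasSum_row (h : |y| < 1) (d : ℕ) :
    HasSum (fun k => totientLogTerm y (d, k)) (d.totient / d * -log (1 - y ^ d)) := by
  rcases Nat.eq_zero_or_pos d with rfl | hd
  · simp [totientLogTerm]
  refine (hasSum_nat_add_iff' 1).1 ?_
  simpa [totientLogTerm, pow_mul] using
    (Real.hasSum_pow_div_log_of_abs_lt_one (abs_pow_lt_one h hd.ne')).mul_left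
      (d.totient / d : ℝ)

end totientLogTerm

theorem hasSum_totient_div_mul_log_one_sub_pow {y : ℝ} (h : |y| < 1) :
    HasSum (fun d : ℕ => (d.totient / d : ℝ) * log (1 - y ^ d)) (-y / (1 - y)) := by
  simpa [neg_div] using
    ((totientLogTerm.hasSum h).prod_fiberwise (totientLogTerm.hasSum_row h)).neg

/-- For `|y| < 1`, the infinite product `∏_{d ≥ 1} (1 − y^d)^{φ(d)/d}` (real powers of the
positive reals `1 − y^d`) has value `exp(−y/(1 − y))`. -/
theorem prod_one_sub_pow_totient (y : ℝ) (h : |y| < 1) :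
    HasProd (fun d : {d : ℕ // 1 ≤ d} =>
        (1 - y ^ d.val) ^ ((Nat.totient d.val : ℝ) / (d.val : ℝ)))
      (Real.exp (-y / (1 - y))) := by
  have hsupp : support (fun d : ℕ => (d.totient / d : ℝ) * log (1 - y ^ d)) ⊆ {d | 1 ≤ d} :=
    fun d hd => Nat.one_le_iff_ne_zero.2 fun h0 => hd (by simp [h0])
  have hsum : HasSum (fun d : {d : ℕ // 1 ≤ d} => (d.1.totient / d.1 : ℝ) * log (1 - y ^ d.1))
      (-y / (1 - y)) :=
    (hasSum_subtype_iff_of_support_subset hsupp).2 (hasSum_totient_div_mul_log_one_sub_pow h)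
  convert hsum.rexp using 1
  funext ⟨d, hd⟩
  have hpos : 0 < 1 - y ^ d :=
    sub_pos.2 (lt_of_abs_lt (abs_pow_lt_one h (Nat.one_le_iff_ne_zero.1 hd)))
  rw [comp_apply, rpow_def_of_pos hpos, mul_comm]
end

section
/- For every integer n ≥ 1 and every integer i, n · #{ J ⊆ {0, 1, …, n−1} : Σ_{j∈J} j ≡ i (mod n) } = Σ_{d | n, d odd} c_d(i) · 2^{n/d}, where the sum is over the odd positive divisors d of n. -/
/-!
Roots-of-unity filter: with `ω` running over the `n`-th roots of unity,
`n · #{J | ∑ J ≡ i} = ∑_ω ω^(-i) ∏_{j<n} (1 + ω^j)`. Group the `ω` by their exact order `d ∣ n`.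
For `ω` of order `d` the product is `(∏_{ξ^d = 1} (1 + ξ))^(n/d) = (1 - (-1)^d)^(n/d)`, which is
`2^(n/d)` for odd `d` and `0` for even `d`, and the sum of `ω^(-i)` over the primitive `d`-th roots
is `c_d(i)`, by Möbius inversion of `∑_{ξ^d = 1} ξ^i = d · [d ∣ i]`.
-/

open Finset

/-- The Ramanujan sum `c_d(i) = Σ_{e | gcd(d,i)} μ(d/e)·e`. -/
def ramanujanSum (d : ℕ) (i : ℤ) : ℤ :=
  ∑ e ∈ (Nat.gcd d i.natAbs).divisors, ArithmeticFunction.moebius (d / e) * (e : ℤ)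

open Polynomial ArithmeticFunction
open scoped ArithmeticFunction.Moebius

theorem Function.Periodic.prod_range_mul_eq_pow {M : Type*} [CommMonoid M] {f : ℕ → M} {d : ℕ}
    (hf : Function.Periodic f d) (t : ℕ) :
    ∏ j ∈ range (t * d), f j = (∏ j ∈ range d, f j) ^ t := by
  induction t with
  | zero => simp
  | succ t ih =>
    have hshift (j : ℕ) : f (t * d + j) = f j := by
      simpa [add_comm] using hf.nat_mul t j
    simp only [Nat.succ_mul, prod_range_add, ih, hshift, pow_succ]

theorem zpow_sum₀ {ι G₀ : Type*} [CommGroupWithZero G₀] {a : G₀} (ha : a ≠ 0) (s : Finset ι)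
    (f : ι → ℤ) : a ^ (∑ i ∈ s, f i) = ∏ i ∈ s, a ^ f i := by
  induction s using Finset.cons_induction with
  | empty => simp
  | cons i s hi ih => rw [sum_cons, prod_cons, zpow_add₀ ha, ih]

theorem ramanujanSum_neg (d : ℕ) (i : ℤ) : ramanujanSum d (-i) = ramanujanSum d i := by
  simp only [ramanujanSum, Int.natAbs_neg]

theorem ramanujanSum_eq_sum_filter_dvd {d : ℕ} (hd : d ≠ 0) (i : ℤ) :
    ramanujanSum d i = ∑ e ∈ d.divisors.filter (fun e : ℕ => (e : ℤ) ∣ i), μ (d / e) * (e : ℤ) := by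
  have hgcd : d.divisors.filter (fun e : ℕ => (e : ℤ) ∣ i) = (d.gcd i.natAbs).divisors := by
    ext e
    simp [Nat.dvd_gcd_iff, Int.natCast_dvd, hd]
  rw [ramanujanSum, hgcd]

theorem sum_nthRootsFinset_one_eq_sum_primitiveRoots {R M : Type*} [CommRing R] [IsDomain R]
    [AddCommMonoid M] (n : ℕ) (f : R → M) :
    ∑ ω ∈ nthRootsFinset n (1 : R), f ω = ∑ d ∈ n.divisors, ∑ ω ∈ primitiveRoots d R, f ω := by
  classical
  rw [IsPrimitiveRoot.nthRoots_one_eq_biUnion_primitiveRoots,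
    sum_biUnion fun _ _ _ _ h => IsPrimitiveRoot.disjoint h]

namespace IsPrimitiveRoot

section CommRing

variable {R : Type*} [CommRing R] [IsDomain R] {ζ : R} {n : ℕ}

theorem nthRootsFinset_one_eq_image_range [DecidableEq R] (hζ : IsPrimitiveRoot ζ n) :
    nthRootsFinset n (1 : R) = (range n).image (ζ ^ ·) := by
  rw [nthRootsFinset_def, hζ.nthRoots_eq (one_pow n), Multiset.toFinset_map]
  simp

theorem prod_nthRootsFinset_one_add (hζ : IsPrimitiveRoot ζ n) (hn : 0 < n) :
    ∏ ω ∈ nthRootsFinset n (1 : R), (1 + ω) = 1 - (-1) ^ n := by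
  simpa [sub_neg_eq_add, add_comm] using (hζ.pow_sub_pow_eq_prod_sub_mul 1 (-1) hn).symm

theorem prod_range_one_add_pow (hζ : IsPrimitiveRoot ζ n) (hn : 0 < n) {m : ℕ} (hnm : n ∣ m) :
    ∏ j ∈ range m, (1 + ζ ^ j) = (1 - (-1) ^ n) ^ (m / n) := by
  have hperiodic : Function.Periodic (fun j => 1 + ζ ^ j) n := fun j => by
    simp [pow_add, hζ.pow_eq_one]
  rw [← Nat.div_mul_cancel hnm, hperiodic.prod_range_mul_eq_pow, Nat.mul_div_cancel _ hn,
    ← hζ.prod_nthRootsFinset_one_add hn]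
  classical
  rw [hζ.nthRootsFinset_one_eq_image_range, prod_image hζ.injOn_pow]

end CommRing

section Field

variable {K : Type*} [Field K] {ζ : K} {n : ℕ}

theorem sum_nthRootsFinset_one_zpow (hζ : IsPrimitiveRoot ζ n) (m : ℤ) :
    ∑ ω ∈ nthRootsFinset n (1 : K), ω ^ m = if (n : ℤ) ∣ m then (n : K) else 0 := by
  have hcomm (k : ℕ) : (ζ ^ k) ^ m = (ζ ^ m) ^ k := by
    rw [← zpow_natCast, ← zpow_natCast, ← zpow_mul, ← zpow_mul, mul_comm]
  classical
  rw [hζ.nthRootsFinset_one_eq_image_range, sum_image hζ.injOn_pow]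
  simp only [hcomm]
  split_ifs with hdvd
  · simp [(hζ.zpow_eq_one_iff_dvd m).2 hdvd]
  · have hne : ζ ^ m ≠ 1 := mt (hζ.zpow_eq_one_iff_dvd m).1 hdvd
    rw [geom_sum_eq hne, ← zpow_natCast, ← zpow_mul, mul_comm, zpow_mul, zpow_natCast,
      hζ.pow_eq_one, one_zpow, sub_self, zero_div]

theorem sum_primitiveRoots_zpow (hζ : IsPrimitiveRoot ζ n) (hn : 0 < n) (j : ℤ) :
    ∑ ω ∈ primitiveRoots n K, ω ^ j = ramanujanSum n j := by
  have hsum : ∀ e > 0, e ∈ {e | e ∣ n} →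
      ∑ d ∈ e.divisors, ∑ ω ∈ primitiveRoots d K, ω ^ j = if (e : ℤ) ∣ j then (e : K) else 0 := by
    intro e _ he
    rw [← sum_nthRootsFinset_one_eq_sum_primitiveRoots,
      (hζ.pow hn (Nat.div_mul_cancel he).symm).sum_nthRootsFinset_one_zpow]
  rw [← (sum_eq_iff_sum_mul_moebius_eq_on _ fun _ _ => dvd_trans).1 hsum n hn dvd_rfl,
    Nat.sum_divisorsAntidiagonal' (fun a b => (μ a : K) * if (b : ℤ) ∣ j then (b : K) else 0),
    ramanujanSum_eq_sum_filter_dvd hn.ne', sum_filter]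
  push_cast
  simp only [mul_ite, mul_zero]

theorem mul_card_filter_sum_modEq {ι : Type*} (hζ : IsPrimitiveRoot ζ n) (s : Finset ι)
    (a : ι → ℤ) (i : ℤ) :
    (n : K) * #{J ∈ s.powerset | ∑ j ∈ J, a j ≡ i [ZMOD n]} =
      ∑ ω ∈ nthRootsFinset n (1 : K), ω ^ (-i) * ∏ j ∈ s, (1 + ω ^ a j) := by
  have hexpand : ∀ ω ∈ nthRootsFinset n (1 : K),
      ω ^ (-i) * ∏ j ∈ s, (1 + ω ^ a j) = ∑ J ∈ s.powerset, ω ^ (∑ j ∈ J, a j - i) := by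
    intro ω hω
    have hω0 := ne_zero_of_mem_nthRootsFinset one_ne_zero hω
    rw [prod_one_add, mul_sum]
    refine sum_congr rfl fun J _ => ?_
    rw [sub_eq_add_neg, zpow_add₀ hω0, zpow_sum₀ hω0, mul_comm]
  have hmodEq (J : Finset ι) : ∑ j ∈ J, a j ≡ i [ZMOD n] ↔ (n : ℤ) ∣ ∑ j ∈ J, a j - i :=
    Int.modEq_comm.trans Int.modEq_iff_dvd
  rw [sum_congr rfl hexpand, sum_comm]
  simp only [hζ.sum_nthRootsFinset_one_zpow]
  rw [← sum_filter, sum_const, nsmul_eq_mul, mul_comm]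
  simp only [hmodEq]

theorem mul_card_subsets_sum_modEq (hζ : IsPrimitiveRoot ζ n) (i : ℤ) :
    (n : K) * #{J : Finset (Fin n) | ∑ j ∈ J, (j : ℤ) ≡ i [ZMOD n]} =
      ∑ d ∈ n.divisors.filter Odd, (ramanujanSum d i : K) * 2 ^ (n / d) := by
  rw [← powerset_univ, hζ.mul_card_filter_sum_modEq, sum_nthRootsFinset_one_eq_sum_primitiveRoots,
    sum_filter]
  refine sum_congr rfl fun d hd => ?_
  obtain ⟨hdn, hn⟩ := Nat.mem_divisors.1 hd
  have hd0 : 0 < d := Nat.pos_of_dvd_of_pos hdn (Nat.pos_of_ne_zero hn)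
  have hprod : ∀ ω ∈ primitiveRoots d K,
      ∏ j : Fin n, (1 + ω ^ (j : ℤ)) = (1 - (-1) ^ d) ^ (n / d) := fun ω hω => by
    simp only [zpow_natCast]
    rw [Fin.prod_univ_eq_prod_range (fun j => 1 + ω ^ j)]
    exact ((mem_primitiveRoots hd0).1 hω).prod_range_one_add_pow hd0 hdn
  rw [sum_congr rfl fun ω hω => by rw [hprod ω hω], ← sum_mul,
    (hζ.pow (Nat.pos_of_ne_zero hn) (Nat.div_mul_cancel hdn).symm).sum_primitiveRoots_zpow hd0,
    ramanujanSum_neg]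
  split_ifs with hodd
  · norm_num [hodd.neg_one_pow]
  · rw [(Nat.not_odd_iff_even.1 hodd).neg_one_pow, sub_self,
      zero_pow (Nat.div_pos (Nat.le_of_dvd (Nat.pos_of_ne_zero hn) hdn) hd0).ne', mul_zero]

end Field

end IsPrimitiveRoot

/-- For `n ≥ 1` and any integer `i`,
`n · #{J ⊆ {0,…,n−1} : Σ_{j∈J} j ≡ i (mod n)} = Σ_{d | n, d odd} c_d(i)·2^{n/d}`. -/
theorem count_subsets_sum_mod (n : ℕ) (hn : 1 ≤ n) (i : ℤ) :
    (n : ℤ) *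
      (Nat.card {J : Finset (Fin n) // (∑ j ∈ J, (j : ℤ)) ≡ i [ZMOD (n : ℤ)]} : ℤ) =
    ∑ d ∈ n.divisors.filter (fun d => Odd d),
      ramanujanSum d i * 2 ^ (n / d) := by
  have hζ := Complex.isPrimitiveRoot_exp n (by omega)
  rw [Nat.card_eq_fintype_card, Fintype.card_subtype]
  exact_mod_cast hζ.mul_card_subsets_sum_modEq i
end
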